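/- Soundness of match constraints: extend patterns with (p with x ⊑ p'), whose declarative rule is θ ⊢ (p with x ⊑ p') ≈ t iff θ ⊢ p ≈ t, θ(x) = t' for some t', and θ ⊢ p' ≈ t'. Extend the machine so that matching (p with x ⊑ p') against t continues with [match p t, backmatch(x, p')], where backmatch(x, p') looks up θ(x) = t' and continues with match p' t'. Then if the machine started from (∅, [], [match p t]) reaches success(θ), then θ ⊢ p ≈ t in the extended declarative semantics. -/

import Mathlib

namespace PyPM
/-- Terms over a signature of function symbols (names with lists of arguments). -/
inductive Tm where
  | app : String → List Tm → Tm


/-- Basic patterns: variables, function applications, and alternates. -/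
inductive Pat where
  | var : String → Pat
  | app : String → List Pat → Pat
  | alt : Pat → Pat → Pat
  | constr : Pat → String → Pat → Pat

/-- Substitutions: finite maps from variables to terms (modeled as partial functions). -/
abbrev Subst := String → Option Tm

def emptySubst : Subst := fun _ => none

def Subst.update (θ : Subst) (x : String) (t : Tm) : Subst :=
  fun y => if y = x then some t else θ y

/-- θ ⊆ θ' : every binding of θ is a binding of θ'. -/
def Subst.le (θ θ' : Subst) : Prop := ∀ x t, θ x = some t → θ' x = some t

/-- Declarative matching semantics: θ ⊢ p ≈ t. -/
inductive Matches : Subst → Pat → Tm → Prop where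
  | var {θ : Subst} {x : String} {t : Tm} :
      θ x = some t → Matches θ (.var x) t
  | app {θ : Subst} {f : String} {ps : List Pat} {ts : List Tm}
      (hlen : ps.length = ts.length)
      (hargs : ∀ i (h1 : i < ps.length) (h2 : i < ts.length), Matches θ ps[i] ts[i]) :
      Matches θ (.app f ps) (.app f ts)
  | alt1 {θ : Subst} {p p' : Pat} {t : Tm} :
      Matches θ p t → Matches θ (.alt p p') t
  | alt2 {θ : Subst} {p p' : Pat} {t : Tm} :
      Matches θ p' t → Matches θ (.alt p p') t
  | constr {θ : Subst} {p p' : Pat} {x : String} {t t' : Tm} :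
      Matches θ p t → θ x = some t' → Matches θ p' t' →
      Matches θ (.constr p x p') t

/-- Actions in the machine continuation. -/
inductive Action where
  | doMatch : Pat → Tm → Action
  | backmatch : String → Pat → Action

abbrev Cont := List Action
abbrev Frame := Subst × Cont
abbrev Stack := List Frame

/-- Machine states. -/
inductive St where
  | success : Subst → St
  | failure : St
  | running : Subst → Stack → Cont → St

/-- Backtracking: pop the stack, or fail if it is empty. -/
def backtrack : Stack → St
  | [] => .failure
  | (θ, k) :: stk => .running θ stk k

/-- The step relation of the algorithmic matching machine. -/
inductive Step : St → St → Prop where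
  | success {θ stk} :
      Step (.running θ stk []) (.success θ)
  | varBind {θ : Subst} {stk x t k} :
      θ x = none →
      Step (.running θ stk (.doMatch (.var x) t :: k)) (.running (θ.update x t) stk k)
  | varBound {θ : Subst} {stk x t k} :
      θ x = some t →
      Step (.running θ stk (.doMatch (.var x) t :: k)) (.running θ stk k)
  | varConflict {θ : Subst} {stk x t t' k} :
      θ x = some t' → t' ≠ t →
      Step (.running θ stk (.doMatch (.var x) t :: k)) (backtrack stk)
  | fn {θ stk f ps ts k} :
      ps.length = ts.length →
      Step (.running θ stk (.doMatch (.app f ps) (.app f ts) :: k))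
           (.running θ stk (((ps.zip ts).map fun pt => .doMatch pt.1 pt.2) ++ k))
  | fnConflict {θ stk f g ps ts k} :
      f ≠ g ∨ ps.length ≠ ts.length →
      Step (.running θ stk (.doMatch (.app f ps) (.app g ts) :: k)) (backtrack stk)
  | alt {θ stk p p' t k} :
      Step (.running θ stk (.doMatch (.alt p p') t :: k))
           (.running θ ((θ, .doMatch p' t :: k) :: stk) (.doMatch p t :: k))
  | matchConstr {θ stk p x p' t k} :
      Step (.running θ stk (.doMatch (.constr p x p') t :: k))
           (.running θ stk (.doMatch p t :: .backmatch x p' :: k))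
  | backmatch {θ : Subst} {stk x p' t' k} :
      θ x = some t' →
      Step (.running θ stk (.backmatch x p' :: k)) (.running θ stk (.doMatch p' t' :: k))

end PyPM

open PyPM

/-!
Read the run backwards. Call a frame `(θ, k)` sound for the final substitution `θf` when
`θ ⊆ θf` and every pending action of `k` holds under `θf` (for `backmatch x p'`: `θf x = t'`
with `θf ⊢ p' ≈ t'`). If a state has a sound frame, current or stacked, so does every
predecessor: each machine rule is the operational reading of a declarative rule, and
substitutions only grow, so facts about `θ` transfer to `θf`. The final state `success θf`
trivially qualifies, and the initial state has an empty stack, so its frame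
`(∅, [match p t])` is sound, i.e. `θf ⊢ p ≈ t`.
-/

namespace PyPM

def Action.Holds (θf : Subst) : Action → Prop
  | .doMatch p t => Matches θf p t
  | .backmatch x p' => ∃ t', θf x = some t' ∧ Matches θf p' t'

def FrameSound (θf θ : Subst) (k : Cont) : Prop :=
  θ.le θf ∧ ∀ a ∈ k, a.Holds θf

def St.HasSoundFrame (θf : Subst) : St → Prop
  | .running θ stk k => FrameSound θf θ k ∨ ∃ fr ∈ stk, FrameSound θf fr.1 fr.2
  | .success θ => θ = θf
  | .failure => False

theorem Subst.le_of_update_le {θ θf : Subst} {x : String} {t : Tm} (hx : θ x = none)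
    (h : (θ.update x t).le θf) : θ.le θf := by
  intro y u hy
  apply h
  have hne : y ≠ x := by rintro rfl; simp [hx] at hy
  simp [Subst.update, hne, hy]

theorem Subst.apply_of_update_le {θ θf : Subst} {x : String} {t : Tm}
    (h : (θ.update x t).le θf) : θf x = some t :=
  h x t (by simp [Subst.update])

theorem matches_app_of_forall_holds {θf : Subst} {f : String} {ps : List Pat} {ts : List Tm}
    (hlen : ps.length = ts.length)
    (h : ∀ a ∈ (ps.zip ts).map (fun pt => Action.doMatch pt.1 pt.2), a.Holds θf) :
    Matches θf (.app f ps) (.app f ts) := by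
  refine Matches.app hlen fun i h1 h2 => h (.doMatch ps[i] ts[i]) ?_
  refine List.mem_map.2 ⟨(ps[i], ts[i]), ?_, rfl⟩
  have hi : i < (ps.zip ts).length := by simp [hlen, h2]
  simpa using List.getElem_mem hi

namespace St

theorem HasSoundFrame.exists_of_backtrack {θf : Subst} {stk : Stack}
    (h : (backtrack stk).HasSoundFrame θf) : ∃ fr ∈ stk, FrameSound θf fr.1 fr.2 := by
  cases stk with
  | nil => exact h.elim
  | cons fr rest =>
    rcases h with h | ⟨fr', hfr', hsound⟩
    · exact ⟨fr, List.mem_cons_self, h⟩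
    · exact ⟨fr', List.mem_cons_of_mem _ hfr', hsound⟩

theorem HasSoundFrame.of_frame {θf θ θ' : Subst} {stk : Stack} {k k' : Cont}
    (hframe : FrameSound θf θ' k' → FrameSound θf θ k)
    (h : (running θ' stk k').HasSoundFrame θf) : (running θ stk k).HasSoundFrame θf :=
  h.imp_left hframe

theorem HasSoundFrame.of_step {θf : Subst} {s s' : St} (hs : Step s s')
    (h : s'.HasSoundFrame θf) : s.HasSoundFrame θf := by
  cases hs with
  | success =>
    subst h
    exact Or.inl ⟨fun _ _ => id, by simp⟩
  | varBind hx =>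
    refine h.of_frame fun ⟨hle, hk⟩ => ⟨Subst.le_of_update_le hx hle, ?_⟩
    simpa [Action.Holds, Matches.var (Subst.apply_of_update_le hle)] using hk
  | varBound hx =>
    refine h.of_frame fun ⟨hle, hk⟩ => ⟨hle, ?_⟩
    simpa [Action.Holds, Matches.var (hle _ _ hx)] using hk
  | varConflict => exact Or.inr h.exists_of_backtrack
  | fn hlen =>
    refine h.of_frame fun ⟨hle, hk⟩ => ⟨hle, ?_⟩
    rw [List.forall_mem_append] at hk
    exact List.forall_mem_cons.2 ⟨matches_app_of_forall_holds hlen hk.1, hk.2⟩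
  | fnConflict => exact Or.inr h.exists_of_backtrack
  | alt =>
    rcases h with ⟨hle, hk⟩ | ⟨fr, hfr, hsound⟩
    · simp only [List.forall_mem_cons] at hk
      exact Or.inl ⟨hle, List.forall_mem_cons.2 ⟨.alt1 hk.1, hk.2⟩⟩
    · rcases List.mem_cons.1 hfr with rfl | hfr
      · obtain ⟨hle, hk⟩ := hsound
        simp only [List.forall_mem_cons] at hk
        exact Or.inl ⟨hle, List.forall_mem_cons.2 ⟨.alt2 hk.1, hk.2⟩⟩
      · exact Or.inr ⟨fr, hfr, hsound⟩
  | matchConstr =>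
    refine h.of_frame fun ⟨hle, hk⟩ => ⟨hle, ?_⟩
    simp only [List.forall_mem_cons] at hk
    obtain ⟨hp, ⟨t', hx, hp'⟩, hrest⟩ := hk
    exact List.forall_mem_cons.2 ⟨.constr hp hx hp', hrest⟩
  | backmatch hx =>
    refine h.of_frame fun ⟨hle, hk⟩ => ⟨hle, ?_⟩
    simp only [List.forall_mem_cons] at hk
    exact List.forall_mem_cons.2 ⟨⟨_, hle _ _ hx, hk.1⟩, hk.2⟩

theorem HasSoundFrame.of_transGen_success {θf : Subst} {s : St}
    (h : Relation.TransGen Step s (.success θf)) : s.HasSoundFrame θf := by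
  induction h using Relation.TransGen.head_induction_on with
  | single hs => exact HasSoundFrame.of_step hs rfl
  | head hs _ ih => exact ih.of_step hs

end St

end PyPM

open PyPM

/-- Soundness of the machine extended with match constraints (success case). -/
theorem matchconstr_soundness_success {p : Pat} {t : Tm} {θ : Subst}
    (h : Relation.TransGen Step (.running emptySubst [] [.doMatch p t]) (.success θ)) :
    Matches θ p t := by
  rcases St.HasSoundFrame.of_transGen_success h with ⟨_, hk⟩ | ⟨_, hfr, _⟩
  · exact hk _ List.mem_cons_self
  · exact absurd hfr List.not_mem_nil
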